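/- arXiv:2605.11302 — 4 statements merged into one kernel-verified Lean document; each statement's English description precedes it below -/
import Mathlib

section
/- For every monotone nondecreasing deadline function D : {1,2,…} → {1,2,…} there exists a countable language collection ℒ such that: for every randomized generator 𝒜, if sup_{K∈ℒ} sup_{E∈ℰ(K)} H_𝒜^{ℒ,K,E}(t) = o(D^{−1}(t)/t) as t → ∞, then there exist a language K ∈ ℒ and a total enumeration E ∈ ℰ(K) such that, almost surely over the generator's internal randomness, liminf_{i→∞} μ^el_i(𝒜(E),K,D) = 0; consequently μ^el_low(𝒜,D) = 0 almost surely. -/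
/-!
Take for `ℒ` the languages `flipLang F`, `F` finite, and for `K` the even numbers `flipLang ∅`.
Cut the indices into blocks `(n r, n (r + 1)]` and let the enumeration reveal `2j` only after the
deadlines of the whole block of `j`. Up to time `D (n (r + 1))` it then coincides with an
enumeration of `flipLang (block n r)`, on which every `2j` of the block is a hallucination, so
the hallucination bound at that time allows in expectation at most `ε_r · n (r + 1)` timely hits
in the block. With `ε_r = 1 / (r + 1)²` and `n (r + 1) ≥ (r + 1) · n r`, the density at index
`n (r + 1)` is at most `1 / (r + 1)` plus a nonnegative variable with summable expectations,
which tends to `0` almost surely. If `D` is bounded, at most `sup D` elements are ever produced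
in time and the density tends to `0` for every enumeration.
-/

open MeasureTheory Filter
open scoped Classical

noncomputable section

/-- The output `o_t` (for `t ≥ 1`) of a generator with next-output function `g`
on the input sequence `X` (indexed from 1): `o_t = g [x_1, …, x_t]`. -/
def outSeq (g : List ℕ → ℕ) (X : ℕ → ℕ) (t : ℕ) : ℕ :=
  g ((List.range t).map fun s => X (s + 1))

/-- The output prefix set `𝒜(X)_t = {o_1, …, o_t}`. -/
def outUpTo (g : List ℕ → ℕ) (X : ℕ → ℕ) (t : ℕ) : Finset ℕ :=
  (Finset.Icc 1 t).image (outSeq g X)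

/-- The observed strings `{x_1, …, x_t}`. -/
def obsUpTo (X : ℕ → ℕ) (t : ℕ) : Finset ℕ :=
  (Finset.Icc 1 t).image X

/-- Validity constraint on a generator: each output is a fresh string, i.e.
`o_t ∉ {x_1,…,x_t} ∪ {o_1,…,o_{t−1}}`. -/
def ValidGen (g : List ℕ → ℕ) : Prop :=
  ∀ (X : ℕ → ℕ) (t : ℕ), 1 ≤ t →
    (∀ s, 1 ≤ s → s ≤ t → outSeq g X t ≠ X s) ∧
    (∀ s, 1 ≤ s → s < t → outSeq g X t ≠ outSeq g X s)

/-- A randomized generator: a probability space `(Ω, P)` of seeds together with a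
measurable family of deterministic (valid) generators. -/
structure RandGen where
  Ω : Type
  mΩ : MeasurableSpace Ω
  P : @Measure Ω mΩ
  prob : @IsProbabilityMeasure Ω mΩ P
  gen : Ω → List ℕ → ℕ
  valid : ∀ ω, ValidGen (gen ω)
  meas : ∀ l : List ℕ, @Measurable Ω ℕ mΩ inferInstance (fun ω => gen ω l)

/-- `k_j`: the `j`-th smallest element of `K` (for `j ≥ 1`). -/
def nthElem (K : Set ℕ) (j : ℕ) : ℕ := Nat.nth (· ∈ K) (j - 1)

/-- `K_i = {k_1, …, k_i}`: the `i` smallest elements of `K`. -/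
def prefixSet (K : Set ℕ) (i : ℕ) : Finset ℕ := (Finset.Icc 1 i).image (nthElem K)

/-- Timely element-wise density `μ^el_i(𝒜(X), K, D)`. -/
def muEl (g : List ℕ → ℕ) (X : ℕ → ℕ) (K : Set ℕ) (D : ℕ → ℕ) (i : ℕ) : ℝ :=
  (∑ j ∈ Finset.Icc 1 i, if nthElem K j ∈ outUpTo g X (D j) then (1 : ℝ) else 0) / i

/-- Prefix-wise density `μ^pfx_i(𝒜(X), K, D) = |𝒜(X)_{D(i)} ∩ K_i| / i`. -/
def muPfx (g : List ℕ → ℕ) (X : ℕ → ℕ) (K : Set ℕ) (D : ℕ → ℕ) (i : ℕ) : ℝ :=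
  ((outUpTo g X (D i) ∩ prefixSet K i).card : ℝ) / i

/-- The number of hallucinations `|𝒜(X)_t \ K|` of a deterministic generator. -/
def hallucCount (g : List ℕ → ℕ) (X : ℕ → ℕ) (K : Set ℕ) (t : ℕ) : ℕ :=
  ((outUpTo g X t).filter fun n => n ∉ K).card

/-- The hallucination rate `H_𝒜^{ℒ,K,X}(t) = 𝔼[|𝒜(X)_t \ K| / t]`,
the expectation being over the internal randomness (the seed). -/
def hallucRate (A : RandGen) (X : ℕ → ℕ) (K : Set ℕ) (t : ℕ) : ℝ :=
  ∫ ω, (hallucCount (A.gen ω) X K t : ℝ) / t ∂A.P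

/-- `E ∈ ℰ(K)`: a total enumeration (with possible repetitions) of `K`. -/
def IsEnumOf (E : ℕ → ℕ) (K : Set ℕ) : Prop :=
  (∀ t, 1 ≤ t → E t ∈ K) ∧ ∀ k ∈ K, ∃ t, 1 ≤ t ∧ E t = k

/-- A countable collection of languages (infinite sets of strings). -/
def IsLangCollection (L : Set (Set ℕ)) : Prop :=
  L.Countable ∧ ∀ K ∈ L, K.Infinite

/-- Generalized inverse `D⁻¹(t) = min {n ≥ 1 : D(n) ≥ t}`. -/
def Dinv (D : ℕ → ℕ) (t : ℕ) : ℕ := sInf {n | 1 ≤ n ∧ t ≤ D n}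

/-- A feasible profile `(D, H)`: `D` is a monotone nondecreasing, discrete convex
(`D(m+1) − D(m) ≥ D(m) − D(m−1)`), superlinear deadline function, and `H` is a
nonnegative monotone nonincreasing vanishing function with `t·H(t)/D⁻¹(t) → ∞`. -/
def FeasibleProfile (D : ℕ → ℕ) (H : ℕ → ℝ) : Prop :=
  (∀ i, 1 ≤ i → 1 ≤ D i) ∧
  (∀ m n, 1 ≤ m → m ≤ n → D m ≤ D n) ∧
  (∀ m, 2 ≤ m → D m + D m ≤ D (m + 1) + D (m - 1)) ∧
  Tendsto (fun i : ℕ => (D i : ℝ) / i) atTop atTop ∧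
  (∀ t, 0 ≤ H t) ∧
  (∀ s t, 1 ≤ s → s ≤ t → H t ≤ H s) ∧
  Tendsto H atTop (nhds 0) ∧
  Tendsto (fun t : ℕ => (t : ℝ) * H t / (Dinv D t : ℝ)) atTop atTop

open Finset

/-- `flipLang F` is obtained from the even numbers `2j` (`j ≥ 1`) by replacing `2j` with `2j + 1`
for every `j ∈ F`; `flipElem F i` is its element of index `i + 1`. -/
def flipElem (F : Finset ℕ) (i : ℕ) : ℕ := 2 * (i + 1) + if i + 1 ∈ F then 1 else 0

def flipLang (F : Finset ℕ) : Set ℕ := Set.range (flipElem F)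

lemma flipElem_strictMono (F : Finset ℕ) : StrictMono (flipElem F) :=
  strictMono_nat_of_lt_succ fun i => by unfold flipElem; split_ifs <;> omega

lemma flipLang_infinite (F : Finset ℕ) : (flipLang F).Infinite :=
  Set.infinite_range_of_injective (flipElem_strictMono F).injective

lemma Nat.nth_mem_range_of_strictMono {f : ℕ → ℕ} (hf : StrictMono f) (i : ℕ) :
    Nat.nth (· ∈ Set.range f) i = f i := by
  have hcount : Nat.count (· ∈ Set.range f) (f i) = i := by
    rw [Nat.count_eq_card_filter_range]
    have : (range (f i)).filter (· ∈ Set.range f) = (range i).image f := by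
      ext m
      simp only [mem_filter, mem_range, mem_image, Set.mem_range]
      constructor
      · rintro ⟨hlt, i', rfl⟩
        exact ⟨i', hf.lt_iff_lt.mp hlt, rfl⟩
      · rintro ⟨i', hi', rfl⟩
        exact ⟨hf.lt_iff_lt.mpr hi', i', rfl⟩
    rw [this, Finset.card_image_of_injective _ hf.injective, Finset.card_range]
  have := Nat.nth_count (p := (· ∈ Set.range f)) ⟨i, rfl⟩
  rwa [hcount] at this

lemma nthElem_flipLang_empty {j : ℕ} (hj : 1 ≤ j) : nthElem (flipLang ∅) j = 2 * j := by
  rw [nthElem, flipLang, Nat.nth_mem_range_of_strictMono (flipElem_strictMono ∅), flipElem]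
  simp only [Finset.notMem_empty, if_false]
  omega

lemma two_mul_notMem_flipLang {F : Finset ℕ} {j : ℕ} (hj : j ∈ F) : 2 * j ∉ flipLang F := by
  rintro ⟨i, hi⟩
  unfold flipElem at hi
  split_ifs at hi with h
  · omega
  · exact h (by rwa [show i + 1 = j by omega])

/-- Enumerates `flipLang F` by revealing its element of index `i + 1` at time `τ i`, and
repeating its first element at all other times. -/
def revealEnum (τ : ℕ → ℕ) (F : Finset ℕ) (x : ℕ) : ℕ :=
  (Function.partialInv τ x).elim (flipElem F 0) (flipElem F)

lemma isEnumOf_revealEnum {τ : ℕ → ℕ} (hτ : Function.Injective τ) (hτ1 : ∀ i, 1 ≤ τ i)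
    (F : Finset ℕ) : IsEnumOf (revealEnum τ F) (flipLang F) := by
  refine ⟨fun x _ => ?_, ?_⟩
  · unfold revealEnum
    cases Function.partialInv τ x <;> exact ⟨_, rfl⟩
  · rintro _ ⟨i, rfl⟩
    refine ⟨τ i, hτ1 i, ?_⟩
    simp [revealEnum, Function.partialInv_left hτ]

lemma revealEnum_empty_eq {τ : ℕ → ℕ} (hτ : Function.Injective τ) {F : Finset ℕ} (h1 : 1 ∉ F)
    {x : ℕ} (hx : ∀ i, i + 1 ∈ F → x < τ i) : revealEnum τ ∅ x = revealEnum τ F x := by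
  unfold revealEnum
  rcases h : Function.partialInv τ x with _ | i
  · simp [flipElem, h1]
  · have hτi : τ i = x := (hτ.isPartialInv i x).mp h
    have hiF : i + 1 ∉ F := fun hi => (hx i hi).ne hτi.symm
    simp [flipElem, hiF]

section Generator

variable (g : List ℕ → ℕ) (X : ℕ → ℕ)

lemma outUpTo_mono {a b : ℕ} (h : a ≤ b) : outUpTo g X a ⊆ outUpTo g X b :=
  image_subset_image (Icc_subset_Icc_right h)

lemma card_outUpTo_le (t : ℕ) : #(outUpTo g X t) ≤ t :=
  card_image_le.trans (by simp)

lemma hallucCount_le (K : Set ℕ) (t : ℕ) : hallucCount g X K t ≤ t :=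
  (card_filter_le _ _).trans (card_outUpTo_le g X t)

lemma outUpTo_congr {X Y : ℕ → ℕ} {t : ℕ} (h : ∀ u, 1 ≤ u → u ≤ t → X u = Y u) :
    outUpTo g X t = outUpTo g Y t := by
  refine image_congr fun s hs => ?_
  have hs : s ≤ t := (Finset.mem_Icc.mp hs).2
  unfold outSeq
  exact congrArg g (List.map_congr_left fun u hu => h (u + 1) (by omega)
    (by have := List.mem_range.mp hu; omega))

def hitCount (K : Set ℕ) (D : ℕ → ℕ) (s : Finset ℕ) : ℕ :=
  #(s.filter fun j => nthElem K j ∈ outUpTo g X (D j))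

variable {g X} {K : Set ℕ} {D : ℕ → ℕ}

lemma muEl_eq_hitCount (i : ℕ) : muEl g X K D i = hitCount g X K D (Icc 1 i) / i := by
  rw [muEl, hitCount, Finset.sum_boole]

lemma hitCount_le_card (s : Finset ℕ) : hitCount g X K D s ≤ #s := card_filter_le _ _

lemma muEl_nonneg (i : ℕ) : 0 ≤ muEl g X K D i := by
  rw [muEl_eq_hitCount]; positivity

lemma muEl_le_one (i : ℕ) : muEl g X K D i ≤ 1 := by
  rw [muEl_eq_hitCount]
  refine div_le_one_of_le₀ ?_ (Nat.cast_nonneg i)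
  exact_mod_cast (hitCount_le_card _).trans (by simp)

lemma hitCount_le_of_deadline_le (hK : K.Infinite) {s : Finset ℕ} {C : ℕ}
    (hs : ∀ j ∈ s, 1 ≤ j ∧ D j ≤ C) : hitCount g X K D s ≤ C := by
  refine le_trans ?_ (card_outUpTo_le g X C)
  refine card_le_card_of_injOn (nthElem K) (fun j hj => ?_) fun a ha b hb hab => ?_
  · obtain ⟨hjs, hjmem⟩ := Finset.mem_filter.mp hj
    exact outUpTo_mono g X (hs j hjs).2 hjmem
  · have ha := (hs a (Finset.mem_filter.mp ha).1).1
    have hb := (hs b (Finset.mem_filter.mp hb).1).1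
    have := Nat.nth_injective hK hab
    omega

lemma tendsto_muEl_zero_of_deadline_le (hK : K.Infinite) {C : ℕ} (hC : ∀ j, 1 ≤ j → D j ≤ C) :
    Tendsto (muEl g X K D) atTop (nhds 0) := by
  refine squeeze_zero muEl_nonneg (fun i => ?_) (tendsto_const_div_atTop_nhds_zero_nat (C : ℝ))
  rw [muEl_eq_hitCount]
  gcongr
  exact hitCount_le_of_deadline_le hK fun j hj =>
    ⟨(Finset.mem_Icc.mp hj).1, hC j (Finset.mem_Icc.mp hj).1⟩

lemma hitCount_Icc_le_add {a b : ℕ} (hab : a ≤ b) :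
    hitCount g X K D (Icc 1 b) ≤ a + hitCount g X K D (Ioc a b) := by
  have hsplit : Icc 1 b = Ioc 0 a ∪ Ioc a b := by
    rw [Finset.Ioc_union_Ioc_eq_Ioc (Nat.zero_le a) hab]; ext; simp; omega
  unfold hitCount
  rw [hsplit, filter_union]
  refine (card_union_le _ _).trans (Nat.add_le_add_right ?_ _)
  exact (card_filter_le _ _).trans (by simp)

lemma hitCount_Ioc_le_hallucCount (hDmono : ∀ m n, 1 ≤ m → m ≤ n → D m ≤ D n) {Y : ℕ → ℕ}
    {a b : ℕ} (hXY : ∀ u, 1 ≤ u → u ≤ D b → X u = Y u) :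
    hitCount g X (flipLang ∅) D (Ioc a b) ≤ hallucCount g Y (flipLang (Ioc a b)) (D b) := by
  refine card_le_card_of_injOn (2 * ·) (fun j hj => ?_) fun x _ y _ hxy => by simpa using hxy
  obtain ⟨hjab, hjmem⟩ := Finset.mem_filter.mp hj
  have hj1 : 1 ≤ j := by have := (Finset.mem_Ioc.mp hjab).1; omega
  rw [nthElem_flipLang_empty hj1] at hjmem
  have hjout := outUpTo_mono g X (hDmono j b hj1 (Finset.mem_Ioc.mp hjab).2) hjmem
  rw [outUpTo_congr g hXY] at hjout
  exact Finset.mem_filter.mpr ⟨hjout, two_mul_notMem_flipLang hjab⟩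

end Generator

lemma outUpTo_eq_image_fin (g : List ℕ → ℕ) (X : ℕ → ℕ) (t : ℕ) :
    outUpTo g X t = univ.image fun s : Fin t => outSeq g X (s + 1) := by
  ext o
  simp only [outUpTo, Finset.mem_image, Finset.mem_Icc, mem_univ, true_and]
  constructor
  · rintro ⟨s, ⟨hs1, hst⟩, rfl⟩
    exact ⟨⟨s - 1, by omega⟩, by simp only; congr; omega⟩
  · rintro ⟨s, rfl⟩
    exact ⟨s + 1, ⟨by omega, s.isLt⟩, rfl⟩

lemma measurable_hallucCount {Ω : Type*} [MeasurableSpace Ω] {gen : Ω → List ℕ → ℕ}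
    (hgen : ∀ l, Measurable fun ω => gen ω l) (X : ℕ → ℕ) (K : Set ℕ) (t : ℕ) :
    Measurable fun ω => (hallucCount (gen ω) X K t : ℝ) := by
  have hprefix : Measurable fun ω (s : Fin t) => outSeq (gen ω) X (s + 1) :=
    measurable_pi_lambda _ fun s => hgen _
  have hfactor : (fun ω => (hallucCount (gen ω) X K t : ℝ)) =
      (fun v : Fin t → ℕ => (#((univ.image v).filter (· ∉ K)) : ℝ)) ∘
        fun ω (s : Fin t) => outSeq (gen ω) X (s + 1) := by
    funext ω
    simp only [Function.comp, hallucCount, outUpTo_eq_image_fin]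
  rw [hfactor]
  exact (measurable_of_countable _).comp hprefix

lemma Dinv_le {D : ℕ → ℕ} {m : ℕ} (hm : 1 ≤ m) : Dinv D (D m) ≤ m :=
  Nat.sInf_le ⟨hm, le_rfl⟩

instance (A : RandGen) : MeasurableSpace A.Ω := A.mΩ

instance (A : RandGen) : IsProbabilityMeasure A.P := A.prob

lemma integrable_hallucCount (A : RandGen) (X : ℕ → ℕ) (K : Set ℕ) (t : ℕ) :
    Integrable (fun ω => (hallucCount (A.gen ω) X K t : ℝ)) A.P := by
  refine (integrable_const (t : ℝ)).mono' (measurable_hallucCount A.meas X K t).aestronglyMeasurable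
    (ae_of_all _ fun ω => ?_)
  rw [Real.norm_natCast]
  exact_mod_cast hallucCount_le _ _ _ _

lemma integral_hallucCount_le {A : RandGen} {D : ℕ → ℕ} {X : ℕ → ℕ} {K : Set ℕ} {m : ℕ} {ε : ℝ}
    (hm : 1 ≤ m) (hDm : 1 ≤ D m) (hε : 0 ≤ ε)
    (h : hallucRate A X K (D m) ≤ ε * Dinv D (D m) / D m) :
    ∫ ω, (hallucCount (A.gen ω) X K (D m) : ℝ) ∂A.P ≤ ε * m := by
  have hDm' : (0 : ℝ) < D m := by exact_mod_cast hDm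
  rw [hallucRate, integral_div, div_le_div_iff_of_pos_right hDm'] at h
  exact h.trans (mul_le_mul_of_nonneg_left (by exact_mod_cast Dinv_le hm) hε)

lemma ae_tendsto_zero_of_summable_integral {Ω : Type*} [MeasurableSpace Ω] {μ : Measure Ω}
    {Y : ℕ → Ω → ℝ} (hY0 : ∀ r ω, 0 ≤ Y r ω) (hYint : ∀ r, Integrable (Y r) μ)
    (hsum : Summable fun r => ∫ ω, Y r ω ∂μ) :
    ∀ᵐ ω ∂μ, Tendsto (fun r => Y r ω) atTop (nhds 0) := by
  have hlint : ∫⁻ ω, ∑' r, ENNReal.ofReal (Y r ω) ∂μ ≠ ⊤ := by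
    rw [lintegral_tsum fun r => (hYint r).aemeasurable.ennreal_ofReal]
    simp_rw [← ofReal_integral_eq_lintegral_ofReal (hYint _) (ae_of_all _ (hY0 _))]
    rw [← ENNReal.ofReal_tsum_of_nonneg (fun r => integral_nonneg (hY0 r)) hsum]
    exact ENNReal.ofReal_ne_top
  filter_upwards [ae_lt_top' (AEMeasurable.tsum fun r =>
    (hYint r).aemeasurable.ennreal_ofReal) hlint] with ω hω
  have := (ENNReal.tendsto_toReal ENNReal.zero_ne_top).comp
    (ENNReal.tendsto_atTop_zero_of_tsum_ne_top hω.ne)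
  simpa [Function.comp_def, ENNReal.toReal_ofReal (hY0 _ ω)] using this

lemma liminf_eq_zero_of_tendsto_comp {f : ℕ → ℝ} {c : ℝ} (h0 : ∀ i, 0 ≤ f i) (hc : ∀ i, f i ≤ c)
    {φ : ℕ → ℕ} (hφ : Tendsto φ atTop atTop) (hf : Tendsto (f ∘ φ) atTop (nhds 0)) :
    liminf f atTop = 0 := by
  refine le_antisymm (le_of_forall_pos_le_add fun δ hδ => ?_)
    (le_liminf_of_le (isCoboundedUnder_ge_of_le atTop hc) (Eventually.of_forall h0))
  rw [zero_add]
  exact liminf_le_of_frequently_le (hφ.frequently (hf.eventually (ge_mem_nhds hδ)).frequently)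
    (isBoundedUnder_of ⟨0, h0⟩)

lemma exists_fast_growing_seq (m : ℕ → ℕ) : ∃ n : ℕ → ℕ, (∀ r, r + 1 ≤ n r) ∧ Monotone n ∧
    ∀ r, (r + 1) * n r ≤ n (r + 1) ∧ m r ≤ n (r + 1) := by
  set n : ℕ → ℕ := fun r => Nat.rec 1 (fun r nr => max ((r + 1) * nr + 1) (m r)) r
  have hstep : ∀ r, (r + 1) * n r + 1 ≤ n (r + 1) ∧ m r ≤ n (r + 1) :=
    fun r => ⟨le_max_left _ _, le_max_right _ _⟩
  have hn : ∀ r, r + 1 ≤ n r := by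
    intro r
    induction r with
    | zero => exact le_rfl
    | succ r ih => nlinarith [(hstep r).1]
  refine ⟨n, hn, monotone_nat_of_le_succ fun r => ?_, fun r => ⟨by linarith [hstep r], (hstep r).2⟩⟩
  nlinarith [(hstep r).1]

/-- The time at which the element of index `i + 1` is revealed: after the deadline `D (n i)`,
which (for `n r ≥ r + 1`) exceeds every deadline of the block `(n r, n (r + 1)]` containing
`i + 1`. -/
def revealTime (D n : ℕ → ℕ) (i : ℕ) : ℕ := D (n i) + i + 1

def block (n : ℕ → ℕ) (r : ℕ) : Finset ℕ := Ioc (n r) (n (r + 1))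

section Construction

variable {D n : ℕ → ℕ}

lemma revealTime_strictMono (hDmono : ∀ a b, 1 ≤ a → a ≤ b → D a ≤ D b) (hn : ∀ r, r + 1 ≤ n r)
    (hnmono : Monotone n) : StrictMono (revealTime D n) :=
  strictMono_nat_of_lt_succ fun i => by
    have := hDmono _ _ (by have := hn i; omega) (hnmono (Nat.le_add_right i 1))
    unfold revealTime; omega

lemma lt_revealTime (hDmono : ∀ a b, 1 ≤ a → a ≤ b → D a ≤ D b) (hn : ∀ r, r + 1 ≤ n r)
    (hnmono : Monotone n) {r i x : ℕ}
    (hi : i + 1 ∈ block n r) (hx : x ≤ D (n (r + 1))) :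
    x < revealTime D n i := by
  have hri : r + 1 ≤ i := by have := hn r; have := (Finset.mem_Ioc.mp hi).1; omega
  have := hDmono _ _ (by have := hn (r + 1); omega) (hnmono hri)
  unfold revealTime; omega

lemma hitCount_revealEnum_le (hDmono : ∀ a b, 1 ≤ a → a ≤ b → D a ≤ D b) (hn : ∀ r, r + 1 ≤ n r)
    (hnmono : Monotone n) (g : List ℕ → ℕ) (r : ℕ) :
    hitCount g (revealEnum (revealTime D n) ∅) (flipLang ∅) D (Icc 1 (n (r + 1))) ≤
      n r + hallucCount g (revealEnum (revealTime D n) (block n r))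
        (flipLang (block n r)) (D (n (r + 1))) := by
  have h1 : 1 ∉ block n r := by have := hn r; simp [block]; omega
  refine (hitCount_Icc_le_add (hnmono r.le_succ)).trans (Nat.add_le_add_left ?_ _)
  refine hitCount_Ioc_le_hallucCount hDmono fun u _ hu => ?_
  exact revealEnum_empty_eq (revealTime_strictMono hDmono hn hnmono).injective h1
    fun i hi => lt_revealTime hDmono hn hnmono hi hu

lemma muEl_revealEnum_le (hDmono : ∀ a b, 1 ≤ a → a ≤ b → D a ≤ D b) (hn : ∀ r, r + 1 ≤ n r)
    (hnmono : Monotone n)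
    (hngrow : ∀ r, (r + 1) * n r ≤ n (r + 1)) (g : List ℕ → ℕ) (r : ℕ) :
    muEl g (revealEnum (revealTime D n) ∅) (flipLang ∅) D (n (r + 1)) ≤
      1 / ((r : ℝ) + 1) + hallucCount g (revealEnum (revealTime D n) (block n r))
        (flipLang (block n r)) (D (n (r + 1))) / n (r + 1) := by
  have hpos : (0 : ℝ) < n (r + 1) := Nat.cast_pos.mpr (by have := hn (r + 1); omega)
  have hratio : (n r : ℝ) / n (r + 1) ≤ 1 / ((r : ℝ) + 1) := by
    rw [div_le_div_iff₀ hpos (by positivity)]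
    exact_mod_cast (by linarith [hngrow r] : n r * (r + 1) ≤ 1 * n (r + 1))
  rw [muEl_eq_hitCount]
  calc _ ≤ ((n r + hallucCount g (revealEnum (revealTime D n) (block n r))
        (flipLang (block n r)) (D (n (r + 1))) : ℕ) : ℝ) / n (r + 1) := by
        gcongr; exact hitCount_revealEnum_le hDmono hn hnmono g r
    _ ≤ _ := by rw [Nat.cast_add, add_div]; gcongr

end Construction

theorem exists_isEnumOf_ae_liminf_muEl_eq_zero (A : RandGen) {D : ℕ → ℕ}
    (hDmono : ∀ a b, 1 ≤ a → a ≤ b → D a ≤ D b) (hunbdd : ∀ C, ∃ m, 1 ≤ m ∧ C ≤ D m)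
    (hA : ∀ ε : ℝ, 0 < ε → ∃ T, ∀ t, T ≤ t → ∀ (F : Finset ℕ) (E : ℕ → ℕ),
      IsEnumOf E (flipLang F) → hallucRate A E (flipLang F) t ≤ ε * (Dinv D t : ℝ) / t) :
    ∃ E : ℕ → ℕ, IsEnumOf E (flipLang ∅) ∧
      ∀ᵐ ω ∂A.P, liminf (fun i => muEl (A.gen ω) E (flipLang ∅) D i) atTop = 0 := by
  choose T hT using fun r : ℕ => hA (1 / ((r : ℝ) + 1) ^ 2) (by positivity)
  choose m hm1 hmT using fun r => hunbdd (max (T r) 1)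
  obtain ⟨n, hn, hnmono, hngrow⟩ := exists_fast_growing_seq m
  have hDn : ∀ r, max (T r) 1 ≤ D (n (r + 1)) :=
    fun r => (hmT r).trans (hDmono _ _ (hm1 r) (hngrow r).2)
  have hτ := revealTime_strictMono hDmono hn hnmono
  have henum := isEnumOf_revealEnum hτ.injective fun i => Nat.le_add_left 1 _
  set Y : ℕ → A.Ω → ℝ := fun r ω => hallucCount (A.gen ω) (revealEnum (revealTime D n) (block n r))
    (flipLang (block n r)) (D (n (r + 1))) / n (r + 1)
  have hYint : ∀ r, ∫ ω, Y r ω ∂A.P ≤ 1 / ((r : ℝ) + 1) ^ 2 := fun r => by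
    have hpos : (0 : ℝ) < n (r + 1) := Nat.cast_pos.mpr (by have := hn (r + 1); omega)
    rw [integral_div, div_le_iff₀ hpos]
    exact integral_hallucCount_le (by have := hn (r + 1); omega) (le_of_max_le_right (hDn r))
      (by positivity) (hT r _ (le_of_max_le_left (hDn r)) _ _ (henum (block n r)))
  have hsum : Summable fun r : ℕ => 1 / ((r : ℝ) + 1) ^ 2 := by
    exact_mod_cast (summable_nat_add_iff 1).mpr (Real.summable_one_div_nat_pow.mpr one_lt_two)
  have hY := ae_tendsto_zero_of_summable_integral (fun r ω => by positivity)
    (fun r => (integrable_hallucCount A _ _ _).div_const _)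
    (hsum.of_nonneg_of_le (fun r => integral_nonneg fun ω => by positivity) hYint)
  refine ⟨_, henum ∅, ?_⟩
  filter_upwards [hY] with ω hω
  refine liminf_eq_zero_of_tendsto_comp muEl_nonneg muEl_le_one
    (tendsto_atTop_mono (fun r => (Nat.le_succ _).trans (hn (r + 1))) (tendsto_add_atTop_nat 1)) ?_
  refine squeeze_zero (fun r => muEl_nonneg _)
    (fun r => muEl_revealEnum_le hDmono hn hnmono (fun r => (hngrow r).1) (A.gen ω) r) ?_
  simpa using tendsto_one_div_add_atTop_nhds_zero_nat.add hω

theorem stmt2_general (D : ℕ → ℕ)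
    (hDmono : ∀ m n, 1 ≤ m → m ≤ n → D m ≤ D n) :
    ∃ L : Set (Set ℕ), IsLangCollection L ∧
      ∀ A : RandGen,
        (∀ ε : ℝ, 0 < ε → ∃ T, ∀ t, T ≤ t →
          ∀ K ∈ L, ∀ E : ℕ → ℕ, IsEnumOf E K →
            hallucRate A E K t ≤ ε * (Dinv D t : ℝ) / t) →
        ∃ K ∈ L, ∃ E : ℕ → ℕ, IsEnumOf E K ∧
          ∀ᵐ ω ∂A.P, liminf (fun i => muEl (A.gen ω) E K D i) atTop = 0 := by
  refine ⟨Set.range flipLang, ⟨Set.countable_range _, ?_⟩, fun A hA => ⟨flipLang ∅, ⟨∅, rfl⟩, ?_⟩⟩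
  · rintro _ ⟨F, rfl⟩
    exact flipLang_infinite F
  by_cases hbdd : ∃ C, ∀ j, 1 ≤ j → D j ≤ C
  · obtain ⟨C, hC⟩ := hbdd
    refine ⟨_, isEnumOf_revealEnum (add_left_injective 1) (fun i => Nat.le_add_left 1 i) ∅,
      ae_of_all _ fun ω => ?_⟩
    exact (tendsto_muEl_zero_of_deadline_le (flipLang_infinite ∅) hC).liminf_eq
  · push Not at hbdd
    refine exists_isEnumOf_ae_liminf_muEl_eq_zero A hDmono (fun C => ?_) fun ε hε => ?_
    · obtain ⟨m, hm1, hm⟩ := hbdd C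
      exact ⟨m, hm1, hm.le⟩
    · obtain ⟨T, hT⟩ := hA ε hε
      exact ⟨T, fun t ht F => hT t ht _ ⟨F, rfl⟩⟩

/-- **Hallucination Barrier.**
For every monotone nondecreasing deadline function `D` there is a countable language
collection `ℒ` such that: every randomized generator `𝒜` with
`sup_{K∈ℒ} sup_{E∈ℰ(K)} H_𝒜^{ℒ,K,E}(t) = o(D⁻¹(t)/t)` admits `K ∈ ℒ` and
`E ∈ ℰ(K)` on which, almost surely, `liminf_{i→∞} μ^el_i(𝒜(E),K,D) = 0`. -/
theorem stmt2 (D : ℕ → ℕ) (hD1 : ∀ i, 1 ≤ i → 1 ≤ D i)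
    (hDmono : ∀ m n, 1 ≤ m → m ≤ n → D m ≤ D n) :
    ∃ L : Set (Set ℕ), IsLangCollection L ∧
      ∀ A : RandGen,
        (∀ ε : ℝ, 0 < ε → ∃ T, ∀ t, T ≤ t →
          ∀ K ∈ L, ∀ E : ℕ → ℕ, IsEnumOf E K →
            hallucRate A E K t ≤ ε * (Dinv D t : ℝ) / t) →
        ∃ K ∈ L, ∃ E : ℕ → ℕ, IsEnumOf E K ∧
          ∀ᵐ ω ∂A.P, liminf (fun i => muEl (A.gen ω) E K D i) atTop = 0 :=
  stmt2_general D hDmono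

end
end

section
/- Let a_0 = 0 and a_i = 3^i for i ≥ 1. For j ≥ 1 let L^j = ∪_{i ≥ 0} ([a_i, a_i + j] ∩ ℕ) and let L^∞ = ℕ. Then L^1 ⊆ L^2 ⊆ ⋯ ⊆ L^∞ and ∪_{j≥1} L^j = ℕ; moreover, for each fixed j there is a constant c_j such that |L^j ∩ {0,1,…,n}| ≤ c_j·(j+1)·(1 + log₃ n) for all n ≥ 1, and consequently lim_{n→∞} |L^j ∩ {0,1,…,n}|/n = 0 for every j. In particular, the collection {L^∞} ∪ {L^j : j ≥ 1} is a measure-zero chain. -/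
open MeasureTheory Filter
open scoped Classical

noncomputable section

/-- A measure-zero chain: a nested family `L^1 ⊆ L^2 ⊆ ⋯` of languages whose union is
the language `L^∞` and such that each `L^j` has vanishing lower density inside the
ordered prefixes of `L^∞`. -/
def MeasureZeroChain (Linf : Set ℕ) (Lj : ℕ → Set ℕ) : Prop :=
  Linf.Infinite ∧ (∀ j, 1 ≤ j → (Lj j).Infinite) ∧
  (∀ j, 1 ≤ j → Lj j ⊆ Lj (j + 1)) ∧
  (∀ j, 1 ≤ j → Lj j ⊆ Linf) ∧
  (⋃ j ∈ {j : ℕ | 1 ≤ j}, Lj j) = Linf ∧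
  (∀ j, 1 ≤ j →
    liminf (fun i =>
      (((prefixSet Linf i).filter fun k => k ∈ Lj j).card : ℝ) / i) atTop = 0)

/-- The markers `a_0 = 0`, `a_i = 3^i` for `i ≥ 1`. -/
def marker (i : ℕ) : ℕ := if i = 0 then 0 else 3 ^ i

/-- `L^j = ∪_{i ≥ 0} [a_i, a_i + j]`. -/
def LMarker (j : ℕ) : Set ℕ := ⋃ i : ℕ, Set.Icc (marker i) (marker i + j)

/-! Only the markers `a_i ≤ n`, i.e. `i ≤ log₃ n`, contribute to `L^j ∩ [0, n]`, each with at
most `j + 1` points; so `L^j` has `O(j log n)` elements up to `n`, which is `o(n)`. Since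
`L^∞ = ℕ`, the `i` smallest elements of `L^∞` are `0, …, i - 1`, and the lower density of
`L^j` there vanishes as well. -/

open Topology Asymptotics

lemma marker_succ (i : ℕ) : marker (i + 1) = 3 ^ (i + 1) := if_neg i.succ_ne_zero

lemma lt_log_succ_of_marker_le {i n : ℕ} (h : marker i ≤ n) : i < Nat.log 3 n + 1 := by
  cases i with
  | zero => omega
  | succ i =>
    rw [marker_succ] at h
    exact Nat.lt_succ_of_le (Nat.le_log_of_pow_le (by norm_num) h)

lemma LMarker_mono : Monotone LMarker := fun _ _ hjj' _ hk => by
  obtain ⟨i, hk⟩ := Set.mem_iUnion.mp hk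
  exact Set.mem_iUnion.mpr ⟨i, hk.1, hk.2.trans (by omega)⟩

lemma mem_LMarker_of_le {n j : ℕ} (h : n ≤ j) : n ∈ LMarker j :=
  Set.mem_iUnion.mpr ⟨0, by simpa [marker] using h⟩

lemma iUnion_LMarker : (⋃ j ∈ {j : ℕ | 1 ≤ j}, LMarker j) = Set.univ :=
  Set.eq_univ_of_forall fun n =>
    Set.mem_biUnion (x := n + 1) (by simp) (mem_LMarker_of_le n.le_succ)

lemma LMarker_infinite (j : ℕ) : (LMarker j).Infinite := by
  refine Set.infinite_of_injective_forall_mem (f := fun i => 3 ^ (i + 1)) ?_ fun i => ?_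
  · exact (Nat.pow_right_injective (by norm_num : 2 ≤ 3)).comp (add_left_injective 1)
  · exact Set.mem_iUnion.mpr ⟨i + 1, by simp [marker_succ]⟩

lemma card_filter_mem_LMarker_le (j n : ℕ) :
    ((Finset.Icc 0 n).filter fun k => k ∈ LMarker j).card ≤ (Nat.log 3 n + 1) * (j + 1) := by
  have hsub : ((Finset.Icc 0 n).filter fun k => k ∈ LMarker j) ⊆
      (Finset.range (Nat.log 3 n + 1)).biUnion fun i => Finset.Icc (marker i) (marker i + j) := by
    intro k hk
    obtain ⟨hkn, hkL⟩ := Finset.mem_filter.mp hk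
    obtain ⟨i, hik⟩ := Set.mem_iUnion.mp hkL
    have hin : marker i ≤ n := hik.1.trans (Finset.mem_Icc.mp hkn).2
    exact Finset.mem_biUnion.mpr ⟨i, Finset.mem_range.mpr (lt_log_succ_of_marker_le hin),
      Finset.mem_Icc.mpr hik⟩
  refine (Finset.card_le_card hsub).trans ?_
  simpa using Finset.card_biUnion_le_card_mul (Finset.range (Nat.log 3 n + 1))
    (fun i => Finset.Icc (marker i) (marker i + j)) (j + 1) fun i _ => by rw [Nat.card_Icc]; omega

lemma card_filter_mem_LMarker_le_logb (j n : ℕ) :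
    (((Finset.Icc 0 n).filter fun k => k ∈ LMarker j).card : ℝ) ≤
      (j + 1) * (1 + Real.logb 3 n) := by
  have hlog : (Nat.log 3 n : ℝ) ≤ Real.logb 3 n := by
    exact_mod_cast Real.natLog_le_logb n 3
  calc (((Finset.Icc 0 n).filter fun k => k ∈ LMarker j).card : ℝ)
      ≤ ((Nat.log 3 n + 1) * (j + 1) : ℕ) := by exact_mod_cast card_filter_mem_LMarker_le j n
    _ = (j + 1) * (1 + (Nat.log 3 n : ℝ)) := by push_cast; ring
    _ ≤ (j + 1) * (1 + Real.logb 3 n) := by gcongr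

lemma isLittleO_const_mul_one_add_logb (b C : ℝ) :
    (fun x : ℝ => C * (1 + Real.logb b x)) =o[atTop] id := by
  have hlogb : (fun x => Real.logb b x) =o[atTop] id := by
    simpa only [Real.logb, div_eq_inv_mul] using
      Real.isLittleO_log_id_atTop.const_mul_left (Real.log b)⁻¹
  exact ((isLittleO_const_id_atTop 1).add hlogb).const_mul_left C

lemma tendsto_div_natCast_zero_of_le_logb {f : ℕ → ℝ} {b C : ℝ} (hf₀ : ∀ n, 0 ≤ f n)
    (hf : ∀ᶠ n in atTop, f n ≤ C * (1 + Real.logb b n)) :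
    Tendsto (fun n => f n / n) atTop (𝓝 0) := by
  have hbound := ((isLittleO_const_mul_one_add_logb b C).comp_tendsto
    tendsto_natCast_atTop_atTop).tendsto_div_nhds_zero
  refine squeeze_zero' (.of_forall fun n => div_nonneg (hf₀ n) n.cast_nonneg) ?_ hbound
  filter_upwards [hf] with n hn
  exact div_le_div_of_nonneg_right hn n.cast_nonneg

lemma prefixSet_univ (i : ℕ) : prefixSet Set.univ i = Finset.range i := by
  have hnth (m : ℕ) : nthElem Set.univ m = m - 1 := by
    simp only [nthElem, Set.mem_univ, Nat.nth_true]
  ext k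
  simp only [prefixSet, Finset.mem_image, Finset.mem_Icc, Finset.mem_range, hnth]
  exact ⟨fun ⟨m, hm, hmk⟩ => by omega, fun hk => ⟨k + 1, by omega, by omega⟩⟩

lemma tendsto_card_filter_prefixSet_univ_div {S : Set ℕ}
    (h : Tendsto (fun n : ℕ => (((Finset.Icc 0 n).filter fun k => k ∈ S).card : ℝ) / n)
      atTop (𝓝 0)) :
    Tendsto (fun i : ℕ => (((prefixSet Set.univ i).filter fun k => k ∈ S).card : ℝ) / i)
      atTop (𝓝 0) := by
  refine squeeze_zero (fun i => by positivity) (fun i => ?_) h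
  rw [prefixSet_univ]
  gcongr
  exact fun k hk => Finset.mem_Icc.mpr ⟨k.zero_le, (Finset.mem_range.mp hk).le⟩

/-- **Marker-Interval Construction.** With `L^∞ = ℕ`, the family `{L^∞} ∪ {L^j : j ≥ 1}`
is nested with union `ℕ`, each `L^j` meets `{0,…,n}` in at most
`c_j (j+1)(1 + log₃ n)` elements, its density vanishes, and the family forms a
measure-zero chain. -/
theorem stmt9 :
    (∀ j, 1 ≤ j → LMarker j ⊆ LMarker (j + 1)) ∧
    (⋃ j ∈ {j : ℕ | 1 ≤ j}, LMarker j) = (Set.univ : Set ℕ) ∧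
    (∀ j : ℕ, ∃ c : ℝ, ∀ n : ℕ, 1 ≤ n →
      (((Finset.Icc 0 n).filter fun k => k ∈ LMarker j).card : ℝ) ≤
        c * (j + 1) * (1 + Real.logb 3 n)) ∧
    (∀ j : ℕ, Tendsto (fun n : ℕ =>
      (((Finset.Icc 0 n).filter fun k => k ∈ LMarker j).card : ℝ) / n) atTop (nhds 0)) ∧
    MeasureZeroChain (Set.univ : Set ℕ) LMarker := by
  have hdensity (j : ℕ) : Tendsto (fun n : ℕ =>
      (((Finset.Icc 0 n).filter fun k => k ∈ LMarker j).card : ℝ) / n) atTop (𝓝 0) :=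
    tendsto_div_natCast_zero_of_le_logb (fun _ => Nat.cast_nonneg _)
      (.of_forall (card_filter_mem_LMarker_le_logb j))
  have hnested (j : ℕ) : LMarker j ⊆ LMarker (j + 1) := LMarker_mono j.le_succ
  exact ⟨fun j _ => hnested j, iUnion_LMarker,
    fun j => ⟨1, fun n _ => by simpa only [one_mul] using card_filter_mem_LMarker_le_logb j n⟩,
    hdensity, Set.infinite_univ, fun j _ => LMarker_infinite j, fun j _ => hnested j,
    fun j _ => Set.subset_univ _, iUnion_LMarker,
    fun j _ => (tendsto_card_filter_prefixSet_univ_div (hdensity j)).liminf_eq⟩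

end
end

section
/- Let (D_el, H_el) be a feasible profile. Then there exists a monotone nondecreasing, superlinear function D_pfx : ℕ → ℕ such that, defining r(i) := max{j ≤ i : D_el(j) < D_pfx(i)} (with r(i) := 0 if no such j exists) and τ(t) := min{n ∈ ℕ : D_pfx(n) > t}, one has r(i)/i → 0 as i → ∞ and τ(t)/(t·H_el(t)) → 0 as t → ∞. -/
open Filter

noncomputable section

private lemma natSSup_le {S : Set ℕ} {n : ℕ} (h : ∀ m ∈ S, m ≤ n) : sSup S ≤ n := by
  rcases S.eq_empty_or_nonempty with h0 | hne
  · rw [h0, csSup_empty]; exact bot_le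
  · exact csSup_le hne h

/-- **Construction of the prefix deadline function.** For any feasible profile
`(D_el, H_el)` there is a monotone nondecreasing superlinear `D_pfx` such that
`r(i) = max{j ≤ i : D_el(j) < D_pfx(i)}` satisfies `r(i)/i → 0` and
`τ(t) = min{n : D_pfx(n) > t}` satisfies `τ(t)/(t·H_el(t)) → 0`. -/
theorem stmt11 (Del : ℕ → ℕ) (Hel : ℕ → ℝ) (hel : FeasibleProfile Del Hel) :
    ∃ Dp : ℕ → ℕ, Monotone Dp ∧
      Tendsto (fun i : ℕ => (Dp i : ℝ) / i) atTop atTop ∧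
      Tendsto (fun i : ℕ =>
        ((sSup {j | j ≤ i ∧ Del j < Dp i} : ℕ) : ℝ) / i) atTop (nhds 0) ∧
      Tendsto (fun t : ℕ =>
        ((sInf {n | t < Dp n} : ℕ) : ℝ) / ((t : ℝ) * Hel t)) atTop (nhds 0) := by
  obtain ⟨hpos, hmono, _hconv, hsl, hHnn, hHdec, _hH0, hratio⟩ := hel
  -- superlinearity thresholds
  have hNex : ∀ l : ℕ, ∃ N : ℕ, 1 ≤ N ∧ ∀ k, N ≤ k → 2 * l ^ 2 * k ≤ Del k := by
    intro l
    have h := hsl.eventually_ge_atTop (2 * (l : ℝ) ^ 2)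
    rw [eventually_atTop] at h
    obtain ⟨a, ha⟩ := h
    refine ⟨max a 1, le_max_right _ _, fun k hk => ?_⟩
    have hk1 : 1 ≤ k := le_trans (le_max_right a 1) hk
    have hka : a ≤ k := le_trans (le_max_left a 1) hk
    have hkpos : (0 : ℝ) < k := by exact_mod_cast hk1
    have h2 : 2 * (l : ℝ) ^ 2 ≤ (Del k : ℝ) / k := ha k hka
    have h3 : 2 * (l : ℝ) ^ 2 * k ≤ Del k := (le_div_iff₀ hkpos).1 h2
    exact_mod_cast h3
  choose N hN1 hN using hNex
  -- Dinv basics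
  have hDne : ∀ t : ℕ, {n | 1 ≤ n ∧ t ≤ Del n}.Nonempty := by
    intro t
    refine ⟨N 1 + t, le_trans (hN1 1) (Nat.le_add_right _ _), ?_⟩
    have := hN 1 (N 1 + t) (Nat.le_add_right _ _)
    omega
  have hDinv_ge1 : ∀ t, 1 ≤ Dinv Del t := fun t => (Nat.sInf_mem (hDne t)).1
  have hDinv_spec : ∀ t, t ≤ Del (Dinv Del t) := fun t => (Nat.sInf_mem (hDne t)).2
  have hDinv_large : ∀ M t, Del M ≤ t → M ≤ Dinv Del (t + 1) := by
    intro M t hMt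
    refine le_csInf (hDne _) fun n hn => ?_
    by_contra hlt
    push_neg at hlt
    have : Del n ≤ Del M := hmono n M hn.1 (le_of_lt hlt)
    have := hn.2
    omega
  -- ratio thresholds
  have hTex : ∀ l : ℕ, ∃ T : ℕ, 1 ≤ T ∧
      ∀ t, T ≤ t → (l : ℝ) ^ 2 * (Dinv Del (t + 1) : ℝ) ≤ (t : ℝ) * Hel t := by
    intro l
    have h := hratio.eventually_ge_atTop (2 * (l : ℝ) ^ 2)
    rw [eventually_atTop] at h
    obtain ⟨a, ha⟩ := h
    refine ⟨max a 1, le_max_right _ _, fun t ht => ?_⟩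
    have ht1 : 1 ≤ t := le_trans (le_max_right a 1) ht
    have hta : a ≤ t + 1 := le_trans (le_trans (le_max_left a 1) ht) (Nat.le_succ t)
    have h2 : 2 * (l : ℝ) ^ 2 ≤ ((t + 1 : ℕ) : ℝ) * Hel (t + 1) / (Dinv Del (t + 1) : ℝ) :=
      ha (t + 1) hta
    have hdpos : (0 : ℝ) < (Dinv Del (t + 1) : ℝ) := by exact_mod_cast hDinv_ge1 (t + 1)
    have h3 : 2 * (l : ℝ) ^ 2 * (Dinv Del (t + 1) : ℝ) ≤ ((t + 1 : ℕ) : ℝ) * Hel (t + 1) :=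
      (le_div_iff₀ hdpos).1 h2
    have hH1 : Hel (t + 1) ≤ Hel t := hHdec t (t + 1) ht1 (Nat.le_succ t)
    have hH2 : 0 ≤ Hel (t + 1) := hHnn (t + 1)
    have ht1' : (1 : ℝ) ≤ t := by exact_mod_cast ht1
    push_cast at h3 ⊢
    nlinarith [sq_nonneg (l : ℝ), hdpos]
  choose T hT1 hT using hTex
  -- the slow-growth scale
  set dmax : ℕ → ℕ := fun l => (Finset.range (T l)).sup (fun t => Dinv Del (t + 1)) with hdmaxdef
  set c : ℕ → ℕ := fun l => l * ((Finset.range (l + 1)).sup (fun j => N j + dmax j) + 1)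
    with hcdef
  have hc_mono : Monotone c := by
    intro a b hab
    exact Nat.mul_le_mul hab (Nat.succ_le_succ (Finset.sup_mono (by
      intro x hx; simp only [Finset.mem_range] at hx ⊢; omega)))
  have hc_ge : ∀ l, l ≤ c l := fun l => Nat.le_mul_of_pos_right l (Nat.succ_pos _)
  have hc_geN : ∀ l, 1 ≤ l → N l + 1 ≤ c l ∧ dmax l + 1 ≤ c l := by
    intro l hl
    have hmem : N l + dmax l ≤ (Finset.range (l + 1)).sup (fun j => N j + dmax j) :=
      Finset.le_sup (f := fun j => N j + dmax j) (Finset.mem_range.2 (Nat.lt_succ_self l))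
    have : (Finset.range (l + 1)).sup (fun j => N j + dmax j) + 1 ≤ c l :=
      le_trans (by omega : _ ≤ 1 * ((Finset.range (l + 1)).sup (fun j => N j + dmax j) + 1))
        (Nat.mul_le_mul hl (le_refl _))
    omega
  -- omega
  set om : ℕ → ℕ := fun m => sSup {l | c l ≤ m} with homdef
  have hombdd : ∀ m, BddAbove {l | c l ≤ m} := by
    intro m
    exact ⟨m, fun l hl => le_trans (hc_ge l) hl⟩
  have homne : ∀ m, {l | c l ≤ m}.Nonempty := by
    intro m
    exact ⟨0, by simp [hcdef]⟩
  have hom_mem : ∀ m, c (om m) ≤ m := fun m => Nat.sSup_mem (homne m) (hombdd m)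
  have hom_ge : ∀ l m, c l ≤ m → l ≤ om m := fun l m h => le_csSup (hombdd m) h
  -- g
  set g : ℕ → ℕ := fun i => sSup {k | k * om k ≤ i} with hgdef
  have hgbdd : ∀ i, BddAbove {k | k * om k ≤ i} := by
    intro i
    refine ⟨max (c 1) i, fun k hk => ?_⟩
    rcases le_or_gt k (c 1) with h | h
    · exact le_trans h (le_max_left _ _)
    · have h1 : 1 ≤ om k := hom_ge 1 k (le_of_lt h)
      have : k ≤ k * om k := Nat.le_mul_of_pos_right k h1
      exact le_trans (le_trans this hk) (le_max_right _ _)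
  have hgne : ∀ i, {k | k * om k ≤ i}.Nonempty := fun i => ⟨0, by simp⟩
  have hg_mem : ∀ i, g i * om (g i) ≤ i := fun i => Nat.sSup_mem (hgne i) (hgbdd i)
  have hg_ge : ∀ k i, k * om k ≤ i → k ≤ g i := fun k i h => le_csSup (hgbdd i) h
  have hg_lt : ∀ i, i < (g i + 1) * om (g i + 1) := by
    intro i
    by_contra h
    push_neg at h
    have := hg_ge (g i + 1) i h
    omega
  have hg_monotone : Monotone g := by
    intro i j hij
    exact hg_ge (g i) j (le_trans (hg_mem i) hij)
  -- Dp
  refine ⟨fun i => Del (max 1 (g i)), ?_, ?_, ?_, ?_⟩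
  · -- monotone
    intro i j hij
    exact hmono _ _ (le_max_left _ _) (max_le_max (le_refl 1) (hg_monotone hij))
  · -- superlinear
    rw [tendsto_atTop]
    intro b
    set L : ℕ := max 1 ⌈b⌉₊ with hLdef
    have hL1 : 1 ≤ L := le_max_left _ _
    rw [eventually_atTop]
    refine ⟨max 1 (c L * om (c L)), fun i hi => ?_⟩
    have hi1 : 1 ≤ i := le_trans (le_max_left _ _) hi
    set k : ℕ := g i with hkdef
    have hkcL : c L ≤ k := hg_ge (c L) i (le_trans (le_max_right _ _) hi)
    have hk1 : 1 ≤ k := le_trans (le_trans hL1 (hc_ge L)) hkcL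
    set l : ℕ := om (k + 1) with hldef
    have hLl : L ≤ l := hom_ge L (k + 1) (le_trans hkcL (Nat.le_succ k))
    have hl1 : 1 ≤ l := le_trans hL1 hLl
    have hcl : c l ≤ k + 1 := hom_mem (k + 1)
    have hNl : N l ≤ k := by have := (hc_geN l hl1).1; omega
    have hDel : 2 * l ^ 2 * k ≤ Del k := hN l k hNl
    have hik : i < (k + 1) * l := hg_lt i
    have hkey : L * i ≤ Del k := by
      calc L * i ≤ l * ((k + 1) * l) := Nat.mul_le_mul hLl (le_of_lt hik)
        _ = l ^ 2 * (k + 1) := by ring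
        _ ≤ l ^ 2 * (2 * k) := Nat.mul_le_mul_left _ (by omega)
        _ = 2 * l ^ 2 * k := by ring
        _ ≤ Del k := hDel
    have hipos : (0 : ℝ) < i := by exact_mod_cast hi1
    have hbL : b ≤ (L : ℝ) := le_trans (Nat.le_ceil b) (by exact_mod_cast le_max_right 1 ⌈b⌉₊)
    have hmax : max 1 (g i) = k := max_eq_right hk1
    show b ≤ ((Del (max 1 (g i)) : ℕ) : ℝ) / i
    rw [hmax]
    refine le_trans hbL ((le_div_iff₀ hipos).2 ?_)
    exact_mod_cast hkey
  · -- r(i)/i → 0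
    rw [Metric.tendsto_atTop]
    intro ε hε
    set L : ℕ := ⌈ε⁻¹⌉₊ + 1 with hLdef
    have hL1 : 1 ≤ L := Nat.le_add_left 1 _
    refine ⟨max 1 (c L * om (c L)), fun i hi => ?_⟩
    have hi1 : 1 ≤ i := le_trans (le_max_left _ _) hi
    set k : ℕ := g i with hkdef
    have hkcL : c L ≤ k := hg_ge (c L) i (le_trans (le_max_right _ _) hi)
    have hk1 : 1 ≤ k := le_trans (le_trans hL1 (hc_ge L)) hkcL
    have homk : L ≤ om k := hom_ge L k hkcL
    have hmax : max 1 k = k := max_eq_right hk1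
    have hr_le : sSup {j | j ≤ i ∧ Del j < Del (max 1 k)} ≤ k := by
      refine natSSup_le fun j hj => ?_
      simp only [Set.mem_setOf_eq] at hj
      obtain ⟨hji, hjD⟩ := hj
      rw [hmax] at hjD
      by_contra hjk
      push_neg at hjk
      have : Del k ≤ Del j := hmono k j hk1 (le_of_lt hjk)
      omega
    have hkLi : k * L ≤ i := le_trans (Nat.mul_le_mul_left k homk) (hg_mem i)
    have hipos : (0 : ℝ) < i := by exact_mod_cast hi1
    have hLpos : (0 : ℝ) < L := by exact_mod_cast hL1
    have h1 : ((sSup {j | j ≤ i ∧ Del j < Del (max 1 (g i))} : ℕ) : ℝ) / i ≤ (k : ℝ) / i := by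
      gcongr
    have h2 : (k : ℝ) / i ≤ 1 / L := by
      rw [div_le_div_iff₀ hipos hLpos]
      have hkLi' : (k : ℝ) * L ≤ i := by exact_mod_cast hkLi
      linarith
    have h3 : (1 : ℝ) / L < ε := by
      rw [div_lt_iff₀ hLpos]
      have : ε⁻¹ < (L : ℝ) := by
        have := Nat.le_ceil (ε⁻¹)
        have h4 : ((⌈ε⁻¹⌉₊ : ℕ) : ℝ) < L := by exact_mod_cast Nat.lt_succ_self ⌈ε⁻¹⌉₊
        linarith
      calc (1 : ℝ) = ε * ε⁻¹ := by field_simp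
        _ < ε * L := by exact mul_lt_mul_of_pos_left this hε
    have hnn : (0 : ℝ) ≤ ((sSup {j | j ≤ i ∧ Del j < Del (max 1 (g i))} : ℕ) : ℝ) / i :=
      div_nonneg (Nat.cast_nonneg _) (le_of_lt hipos)
    rw [Real.dist_eq, sub_zero, abs_of_nonneg hnn]
    exact lt_of_le_of_lt (le_trans h1 h2) h3
  · -- tau(t)/(t H t) → 0
    rw [Metric.tendsto_atTop]
    intro ε hε
    set L : ℕ := ⌈ε⁻¹⌉₊ + 1 with hLdef
    have hL1 : 1 ≤ L := Nat.le_add_left 1 _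
    refine ⟨max 1 (Del (c L)), fun t ht => ?_⟩
    set m : ℕ := Dinv Del (t + 1) with hmdef
    have hm1 : 1 ≤ m := hDinv_ge1 (t + 1)
    have hmcL : c L ≤ m := hDinv_large (c L) t (le_trans (le_max_right _ _) ht)
    set K : ℕ := om m with hKdef
    have hKL : L ≤ K := hom_ge L m hmcL
    have hK1 : 1 ≤ K := le_trans hL1 hKL
    have hcK : c K ≤ m := hom_mem m
    have hdK : dmax K + 1 ≤ c K := (hc_geN K hK1).2
    have htT : T K ≤ t := by
      by_contra hlt
      push_neg at hlt
      have : Dinv Del (t + 1) ≤ dmax K :=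
        Finset.le_sup (f := fun t => Dinv Del (t + 1)) (Finset.mem_range.2 hlt)
      omega
    have hTK : (K : ℝ) ^ 2 * (m : ℝ) ≤ (t : ℝ) * Hel t := hT K t htT
    -- tau bound
    have htau : sInf {n | t < Del (max 1 (g n))} ≤ m * K := by
      apply Nat.sInf_le
      have hgm : m ≤ g (m * K) := hg_ge m (m * K) (le_refl _)
      have hgm' : m ≤ max 1 (g (m * K)) := le_trans hgm (le_max_right _ _)
      have : Del m ≤ Del (max 1 (g (m * K))) := hmono m _ hm1 hgm'
      have hspec : t + 1 ≤ Del m := hDinv_spec (t + 1)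
      simp only [Set.mem_setOf_eq]
      omega
    have hKpos : (0 : ℝ) < K := by exact_mod_cast hK1
    have hmpos : (0 : ℝ) < m := by exact_mod_cast hm1
    have hpos : (0 : ℝ) < (K : ℝ) ^ 2 * m := by positivity
    have htHpos : (0 : ℝ) < (t : ℝ) * Hel t := lt_of_lt_of_le (by nlinarith) hTK
    have h1 : ((sInf {n | t < Del (max 1 (g n))} : ℕ) : ℝ) / ((t : ℝ) * Hel t) ≤
        ((m : ℝ) * K) / ((K : ℝ) ^ 2 * m) := by
      apply div_le_div₀ (by positivity) _ hpos hTK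
      exact_mod_cast htau
    have h2 : ((m : ℝ) * K) / ((K : ℝ) ^ 2 * m) = 1 / K := by
      field_simp
    have h3 : (1 : ℝ) / K ≤ 1 / L := by
      apply one_div_le_one_div_of_le (by exact_mod_cast hL1)
      exact_mod_cast hKL
    have hLpos : (0 : ℝ) < L := by exact_mod_cast hL1
    have h4 : (1 : ℝ) / L < ε := by
      rw [div_lt_iff₀ hLpos]
      have : ε⁻¹ < (L : ℝ) := by
        have := Nat.le_ceil (ε⁻¹)
        have h5 : ((⌈ε⁻¹⌉₊ : ℕ) : ℝ) < L := by exact_mod_cast Nat.lt_succ_self ⌈ε⁻¹⌉₊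
        linarith
      calc (1 : ℝ) = ε * ε⁻¹ := by field_simp
        _ < ε * L := by exact mul_lt_mul_of_pos_left this hε
    have hnn : (0 : ℝ) ≤ ((sInf {n | t < Del (max 1 (g n))} : ℕ) : ℝ) / ((t : ℝ) * Hel t) :=
      div_nonneg (Nat.cast_nonneg _) (le_of_lt htHpos)
    rw [Real.dist_eq, sub_zero, abs_of_nonneg hnn]
    rw [h2] at h1
    exact lt_of_le_of_lt (le_trans h1 h3) h4

end
end

section
/- Let K be an infinite subset of ℕ with elements k_1 < k_2 < ⋯, let E ∈ ℰ(K) be any total enumeration of K with values e_1,e_2,…, let D(i) = i be the identity deadline function, and let T ≥ 1. Suppose a deterministic generator 𝒜 with outputs o_1,o_2,… satisfies, for every t ≥ T: o_t = k_{j_t}, where j_t = min{ j ≥ t : k_j ∉ {e_1,…,e_t} ∪ {o_1,…,o_{t−1}} } (i.e., from time T onward it always outputs the earliest element of K that is not yet late under D and has not previously been output or observed). Then for every i > 2T, at least ⌊(i − 2T)/2⌋ of the elements k_1,…,k_i are generated on time, i.e., Σ_{j=1}^{i} 1{k_j ∈ {o_1,…,o_j}} ≥ ⌊(i − 2T)/2⌋;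 consequently liminf_{i→∞} μ^el_i(𝒜(E),K,D) ≥ 1/2. -/
open MeasureTheory Filter
open scoped Classical

noncomputable section

/-- **Greedy on-time generation achieves density 1/2.** If from time `T` on a valid
deterministic generator always outputs the earliest element of `K` that is not yet
late (under the identity deadline) and has not previously been output or observed,
then for every `i > 2T` at least `⌊(i − 2T)/2⌋` of `k_1, …, k_i` are generated on
time, and consequently the timely element-wise lower density is at least `1/2`. -/
theorem stmt17 (K : Set ℕ) (hK : K.Infinite) (E : ℕ → ℕ) (hE : IsEnumOf E K)
    (o : ℕ → ℕ) (T : ℕ) (hT : 1 ≤ T)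
    (hvalid : ∀ t, 1 ≤ t →
      (∀ s, 1 ≤ s → s ≤ t → o t ≠ E s) ∧ (∀ s, 1 ≤ s → s < t → o t ≠ o s))
    (hgreedy : ∀ t, T ≤ t →
      o t = nthElem K (sInf {j | t ≤ j ∧
        (∀ s, 1 ≤ s → s ≤ t → E s ≠ nthElem K j) ∧
        (∀ s, 1 ≤ s → s < t → o s ≠ nthElem K j)})) :
    (∀ i, 2 * T < i →
      (i - 2 * T) / 2 ≤
        ((Finset.Icc 1 i).filter fun j =>
          nthElem K j ∈ (Finset.Icc 1 j).image o).card) ∧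
    (1 : ℝ) / 2 ≤ liminf (fun i : ℕ =>
      (((Finset.Icc 1 i).filter fun j =>
        nthElem K j ∈ (Finset.Icc 1 j).image o).card : ℝ) / i) atTop := by
  classical
  have hKp : {x | x ∈ K}.Infinite := hK
  have hk_inj : ∀ a b, 1 ≤ a → 1 ≤ b → nthElem K a = nthElem K b → a = b := by
    intro a b ha hb h
    have := Nat.nth_injective hKp h
    omega
  have hk_mono : StrictMono (Nat.nth (· ∈ K)) := fun m n h => (Nat.nth_lt_nth hKp).2 h
  have hk_ge : ∀ j, j - 1 ≤ nthElem K j := fun j => hk_mono.le_apply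
  set S : ℕ → Set ℕ := fun t => {j | t ≤ j ∧
        (∀ s, 1 ≤ s → s ≤ t → E s ≠ nthElem K j) ∧
        (∀ s, 1 ≤ s → s < t → o s ≠ nthElem K j)} with hS
  have hSne : ∀ t, (S t).Nonempty := by
    intro t
    set F : Finset ℕ := ((Finset.Icc 1 t).image E) ∪ ((Finset.Icc 1 t).image o) with hF
    have hbig : F.sup id + 1 ≤ nthElem K (max t (F.sup id + 2)) := by
      have h1 := hk_ge (max t (F.sup id + 2))
      have h2 : F.sup id + 2 ≤ max t (F.sup id + 2) := le_max_right _ _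
      omega
    refine ⟨max t (F.sup id + 2), le_max_left _ _, ?_, ?_⟩
    · intro s h1 h2 hEs
      have hle : E s ≤ F.sup id :=
        Finset.le_sup (f := id)
          (Finset.mem_union_left _ (Finset.mem_image.2 ⟨s, Finset.mem_Icc.2 ⟨h1, h2⟩, rfl⟩))
      omega
    · intro s h1 h2 hos
      have hle : o s ≤ F.sup id :=
        Finset.le_sup (f := id)
          (Finset.mem_union_right _ (Finset.mem_image.2 ⟨s, Finset.mem_Icc.2 ⟨h1, by omega⟩, rfl⟩))
      omega
  set J : ℕ → ℕ := fun t => sInf (S t) with hJ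
  have hJmem : ∀ t, J t ∈ S t := fun t => Nat.sInf_mem (hSne t)
  have hJt : ∀ t, t ≤ J t := fun t => (hJmem t).1
  have hJmin : ∀ t j, j < J t → j ∉ S t := fun t j h => Nat.notMem_of_lt_sInf h
  have ho : ∀ t, T ≤ t → o t = nthElem K (J t) := hgreedy
  have ho_inj : ∀ s t, 1 ≤ s → s < t → o t ≠ o s := fun s t hs hst =>
    (hvalid t (by omega)).2 s hs hst
  have main : ∀ i, 2 * T < i → (i - 2 * T) / 2 ≤
      ((Finset.Icc 1 i).filter fun j => nthElem K j ∈ (Finset.Icc 1 j).image o).card := by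
    intro i hi
    set OT : Finset ℕ :=
      (Finset.Icc 1 i).filter (fun j => nthElem K j ∈ (Finset.Icc 1 j).image o) with hOT
    set t₀ : ℕ := sInf ({t | T ≤ t ∧ i < J t} ∪ {i + 1}) with ht₀def
    have hne : ({t | T ≤ t ∧ i < J t} ∪ {i + 1} : Set ℕ).Nonempty := ⟨i + 1, Or.inr rfl⟩
    have ht₀mem := Nat.sInf_mem hne
    have ht₀le : t₀ ≤ i + 1 := Nat.sInf_le (Or.inr rfl)
    have ht₀T : T ≤ t₀ := by
      rcases ht₀mem with h | h
      · exact h.1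
      · rw [Set.mem_singleton_iff] at h; omega
    have hA : ∀ t, T ≤ t → t < t₀ → J t ≤ i := by
      intro t hTt hlt
      by_contra h
      have hmem : t ∈ ({t | T ≤ t ∧ i < J t} ∪ {i + 1} : Set ℕ) := Or.inl ⟨hTt, by omega⟩
      have hle := Nat.sInf_le hmem
      rw [← ht₀def] at hle
      omega
    have hB : t₀ ≤ i → i < J t₀ := by
      intro h
      rcases ht₀mem with hm | hm
      · exact hm.2
      · rw [Set.mem_singleton_iff] at hm; omega
    -- Claim 1 : every greedy step before t₀ produces an on-time index ≤ i
    have hclaim1 : t₀ - T ≤ OT.card := by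
      have hmaps : ∀ s ∈ Finset.Ico T t₀, J s ∈ OT := by
        intro s hs
        rw [Finset.mem_Ico] at hs
        have hsJ : s ≤ J s := hJt s
        refine Finset.mem_filter.2 ⟨Finset.mem_Icc.2 ⟨by omega, hA s hs.1 hs.2⟩, ?_⟩
        exact Finset.mem_image.2 ⟨s, Finset.mem_Icc.2 ⟨by omega, hsJ⟩, ho s hs.1⟩
      have hinj : Set.InjOn J (Finset.Ico T t₀) := by
        intro a ha b hb hab
        rw [Finset.coe_Ico, Set.mem_Ico] at ha hb
        by_contra hne'
        rcases Nat.lt_or_ge a b with h | h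
        · exact ho_inj a b (by omega) h (by rw [ho b hb.1, ho a ha.1, hab])
        · have h' : b < a := by omega
          exact ho_inj b a (by omega) h' (by rw [ho a ha.1, ho b hb.1, hab])
      have := Finset.card_le_card_of_injOn J hmaps hinj
      simpa [Nat.card_Ico] using this
    -- Claim 2 : every missed index in [T, i] is blocked by a distinct E-value at time ≤ t₀
    set Miss : Finset ℕ :=
      (Finset.Icc T i).filter (fun j => ¬ nthElem K j ∈ (Finset.Icc 1 j).image o) with hMiss
    have hexists : ∀ j ∈ Miss, ∃ s, 1 ≤ s ∧ s ≤ t₀ ∧ E s = nthElem K j := by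
      intro j hj
      rw [hMiss, Finset.mem_filter, Finset.mem_Icc] at hj
      obtain ⟨⟨hTj, hji⟩, hmiss⟩ := hj
      rcases Nat.lt_or_ge j t₀ with hcase | hcase
      · -- j < t₀ : k_j must be blocked at time j, and not by an output
        have hjS : j ∉ S j := by
          intro hjS
          have h1 : J j ≤ j := Nat.sInf_le hjS
          have h2 : j ≤ J j := hJt j
          have hoj : o j = nthElem K j := by
            rw [ho j hTj]
            congr 1
            omega
          exact hmiss (Finset.mem_image.2 ⟨j, Finset.mem_Icc.2 ⟨by omega, le_refl j⟩, hoj⟩)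
        by_cases hP : ∀ s, 1 ≤ s → s ≤ j → E s ≠ nthElem K j
        · by_cases hQ : ∀ s, 1 ≤ s → s < j → o s ≠ nthElem K j
          · exact absurd ⟨le_refl j, hP, hQ⟩ hjS
          · push_neg at hQ
            obtain ⟨s, hs1, hs2, hs3⟩ := hQ
            exact absurd (Finset.mem_image.2 ⟨s, Finset.mem_Icc.2 ⟨hs1, by omega⟩, hs3⟩) hmiss
        · push_neg at hP
          obtain ⟨s, hs1, hs2, hs3⟩ := hP
          exact ⟨s, hs1, by omega, hs3⟩
      · -- t₀ ≤ j ≤ i < J t₀ : k_j blocked at time t₀, not by an output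
        have hjS : j ∉ S t₀ := hJmin t₀ j (lt_of_le_of_lt hji (hB (le_trans hcase hji)))
        by_cases hP : ∀ s, 1 ≤ s → s ≤ t₀ → E s ≠ nthElem K j
        · by_cases hQ : ∀ s, 1 ≤ s → s < t₀ → o s ≠ nthElem K j
          · exact absurd ⟨hcase, hP, hQ⟩ hjS
          · push_neg at hQ
            obtain ⟨s, hs1, hs2, hs3⟩ := hQ
            exact absurd (Finset.mem_image.2 ⟨s, Finset.mem_Icc.2 ⟨hs1, by omega⟩, hs3⟩) hmiss
        · push_neg at hP
          obtain ⟨s, hs1, hs2, hs3⟩ := hP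
          exact ⟨s, hs1, hs2, hs3⟩
    have hclaim2 : Miss.card ≤ t₀ := by
      set f : ℕ → ℕ := fun j =>
        if h : ∃ s, 1 ≤ s ∧ s ≤ t₀ ∧ E s = nthElem K j then h.choose else 0 with hf
      have hfspec : ∀ j ∈ Miss, 1 ≤ f j ∧ f j ≤ t₀ ∧ E (f j) = nthElem K j := by
        intro j hj
        have h := hexists j hj
        simp only [hf, dif_pos h]
        exact h.choose_spec
      have hmaps : ∀ j ∈ Miss, f j ∈ Finset.Icc 1 t₀ := fun j hj =>
        Finset.mem_Icc.2 ⟨(hfspec j hj).1, (hfspec j hj).2.1⟩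
      have hinj : Set.InjOn f Miss := by
        intro a ha b hb hab
        rw [Finset.mem_coe] at ha hb
        have ha1 : 1 ≤ a := by
          have := (Finset.mem_Icc.1 (Finset.mem_filter.1 ha).1).1; omega
        have hb1 : 1 ≤ b := by
          have := (Finset.mem_Icc.1 (Finset.mem_filter.1 hb).1).1; omega
        have h1 := (hfspec a ha).2.2
        have h2 := (hfspec b hb).2.2
        rw [hab, h2] at h1
        exact (hk_inj b a hb1 ha1 h1).symm
      have := Finset.card_le_card_of_injOn f hmaps hinj
      simpa [Nat.card_Icc] using this
    -- combine
    have hsplit :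
        ((Finset.Icc T i).filter (fun j => nthElem K j ∈ (Finset.Icc 1 j).image o)).card
          + Miss.card = (Finset.Icc T i).card :=
      Finset.card_filter_add_card_filter_not _
    have hsub : ((Finset.Icc T i).filter
        (fun j => nthElem K j ∈ (Finset.Icc 1 j).image o)).card ≤ OT.card := by
      apply Finset.card_le_card
      intro j hj
      rw [Finset.mem_filter, Finset.mem_Icc] at hj
      exact Finset.mem_filter.2 ⟨Finset.mem_Icc.2 ⟨by omega, hj.1.2⟩, hj.2⟩
    have hcardTi : (Finset.Icc T i).card = i + 1 - T := Nat.card_Icc T i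
    omega
  refine ⟨main, ?_⟩
  -- liminf part
  have hg : Tendsto (fun i : ℕ => ((i : ℝ) - (2 * T + 1)) / (2 * i)) atTop (nhds (1 / 2)) := by
    have h1 : Tendsto (fun i : ℕ => 1 / 2 - ((2 * (T : ℝ) + 1) / 2) / i) atTop
        (nhds (1 / 2 - 0)) :=
      tendsto_const_nhds.sub (tendsto_const_div_atTop_nhds_zero_nat _)
    rw [sub_zero] at h1
    apply h1.congr'
    filter_upwards [eventually_ge_atTop 1] with i hi
    have hi' : (i : ℝ) ≠ 0 := by
      have : (0 : ℝ) < i := by exact_mod_cast Nat.lt_of_lt_of_le Nat.zero_lt_one hi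
      linarith
    field_simp
  have hev : ∀ᶠ i : ℕ in atTop, ((i : ℝ) - (2 * T + 1)) / (2 * i) ≤
      (((Finset.Icc 1 i).filter fun j =>
        nthElem K j ∈ (Finset.Icc 1 j).image o).card : ℝ) / i := by
    filter_upwards [eventually_gt_atTop (2 * T)] with i hi
    have hN := main i hi
    set N : ℕ := ((Finset.Icc 1 i).filter fun j =>
        nthElem K j ∈ (Finset.Icc 1 j).image o).card with hNdef
    have h2 : (i : ℝ) ≤ 2 * N + 2 * T + 1 := by
      have : i ≤ 2 * N + 2 * T + 1 := by omega
      exact_mod_cast this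
    have hipos : (0 : ℝ) < i := by
      have : 0 < i := by omega
      exact_mod_cast this
    rw [div_le_div_iff₀ (by positivity) hipos]
    nlinarith [Nat.cast_nonneg (α := ℝ) N]
  have hco : IsBoundedUnder (· ≥ ·) atTop
      (fun i : ℕ => ((i : ℝ) - (2 * T + 1)) / (2 * i)) :=
    hg.isBoundedUnder_ge
  have hbd : IsCoboundedUnder (· ≥ ·) atTop (fun i : ℕ =>
      (((Finset.Icc 1 i).filter fun j =>
        nthElem K j ∈ (Finset.Icc 1 j).image o).card : ℝ) / i) := by
    apply isCoboundedUnder_ge_of_le atTop (x := (1 : ℝ))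
    intro i
    rcases Nat.eq_zero_or_pos i with h0 | hpos
    · simp [h0]
    · have hipos : (0 : ℝ) < i := by exact_mod_cast hpos
      rw [div_le_one hipos]
      have hcard : ((Finset.Icc 1 i).filter fun j =>
          nthElem K j ∈ (Finset.Icc 1 j).image o).card ≤ i := by
        have h1 := Finset.card_filter_le (Finset.Icc 1 i)
          (fun j => nthElem K j ∈ (Finset.Icc 1 j).image o)
        have h2 : (Finset.Icc 1 i).card = i := by rw [Nat.card_Icc]; omega
        omega
      exact_mod_cast hcard
  calc (1 : ℝ) / 2 = liminf (fun i : ℕ => ((i : ℝ) - (2 * T + 1)) / (2 * i)) atTop :=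
        hg.liminf_eq.symm
    _ ≤ _ := liminf_le_liminf hev hco hbd


end
end
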